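/- The cyclic incidence structure with point set Z_n and lines {i, i+1, i+3} (mod n) for i ∈ Z_n is a symmetric n₃ configuration (i.e., it is linear with each point on exactly 3 lines and each line containing exactly 3 points) if and only if n ≥ 7. -/

import Mathlib

open SimpleGraph

/-- A 2-factor of `G`: a spanning subgraph in which every vertex has degree exactly 2. -/
def SimpleGraph.IsTwoFactor {V : Type*} (G F : SimpleGraph V) : Prop :=
  F ≤ G ∧ ∀ v : V, (F.neighborSet v).ncard = 2

/-- The number of cycles of a 2-factor, i.e. its number of connected components. -/
noncomputable def SimpleGraph.numCycles {V : Type*} (F : SimpleGraph V) : ℕ :=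
  Nat.card F.ConnectedComponent

/-- A graph is pseudo 2-factor isomorphic if all its 2-factors have the same
parity of number of cycles. -/
def SimpleGraph.PseudoTwoFactorIsomorphic {V : Type*} (G : SimpleGraph V) : Prop :=
  ∀ F₁ F₂ : SimpleGraph V, G.IsTwoFactor F₁ → G.IsTwoFactor F₂ →
    F₁.numCycles % 2 = F₂.numCycles % 2

/-- Line `i` of the cyclic incidence structure with base line `{0,1,3}`. -/
def cyclicLine (n : ℕ) (i : ZMod n) : Set (ZMod n) := {i, i + 1, i + 3}

lemma Set.ncard_triple_eq_three_iff {α : Type*} {a b c : α} :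
    ({a, b, c} : Set α).ncard = 3 ↔ a ≠ b ∧ a ≠ c ∧ b ≠ c := by
  classical
  rw [← Finset.card_triple_eq_three_iff, ← Set.ncard_coe_finset]
  simp only [Finset.coe_insert, Finset.coe_singleton]

lemma ZMod.eq_of_intCast_eq_of_abs_sub_lt {n : ℕ} {a b : ℤ} (h : (a : ZMod n) = b)
    (hab : |a - b| < n) : a = b := by
  rw [ZMod.intCast_eq_intCast_iff_dvd_sub] at h
  have := Int.eq_zero_of_abs_lt_dvd h (by rwa [abs_sub_comm])
  omega

lemma ZMod.natCast_ne_zero_of_lt {n k : ℕ} (hk : 0 < k) (hkn : k < n) : (k : ZMod n) ≠ 0 :=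
  (ZMod.natCast_eq_zero_iff k n).not.2 (Nat.not_dvd_of_pos_of_lt hk hkn)

section
variable {n : ℕ}

lemma mem_cyclicLine {p i : ZMod n} : p ∈ cyclicLine n i ↔ p = i ∨ p = i + 1 ∨ p = i + 3 :=
  Iff.rfl

lemma mem_cyclicLine_iff_exists_int {p i : ZMod n} :
    p ∈ cyclicLine n i ↔ ∃ a ∈ ({0, 1, 3} : Finset ℤ), p = i + a := by
  simp [cyclicLine]

lemma cyclicLine_eq_image (i : ZMod n) : cyclicLine n i = (i + ·) '' cyclicLine n 0 := by
  simp [cyclicLine, Set.image_insert_eq]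

lemma setOf_mem_cyclicLine_eq_image (p : ZMod n) :
    {i | p ∈ cyclicLine n i} = (p - ·) '' cyclicLine n 0 := by
  ext i
  simp only [cyclicLine, Set.mem_ofPred_eq, Set.image_insert_eq, Set.image_singleton,
    Set.mem_insert_iff, Set.mem_singleton_iff, zero_add, sub_zero, eq_sub_iff_add_eq]
  simp only [eq_comm]

lemma ncard_cyclicLine_zero_eq_three_iff :
    (cyclicLine n 0).ncard = 3 ↔ (1 : ZMod n) ≠ 0 ∧ (2 : ZMod n) ≠ 0 ∧ (3 : ZMod n) ≠ 0 := by
  have h13 : (1 : ZMod n) = 3 ↔ (2 : ZMod n) = 0 :=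
    ⟨fun h => by linear_combination -h, fun h => by linear_combination -h⟩
  rw [cyclicLine, zero_add, zero_add, Set.ncard_triple_eq_three_iff,
    ne_comm (a := (0 : ZMod n)), ne_comm (a := (0 : ZMod n))]
  simp only [ne_eq, h13]
  tauto

lemma ncard_cyclicLine_zero (hn : 4 ≤ n) : (cyclicLine n 0).ncard = 3 :=
  ncard_cyclicLine_zero_eq_three_iff.2
    ⟨by exact_mod_cast ZMod.natCast_ne_zero_of_lt (k := 1) one_pos (by omega),
      by exact_mod_cast ZMod.natCast_ne_zero_of_lt (k := 2) two_pos (by omega),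
      by exact_mod_cast ZMod.natCast_ne_zero_of_lt (k := 3) three_pos (by omega)⟩

lemma eq_of_mem_cyclicLine_of_mem_cyclicLine (hn : 7 ≤ n) {p q i j : ZMod n} (hpq : p ≠ q)
    (hpi : p ∈ cyclicLine n i) (hqi : q ∈ cyclicLine n i)
    (hpj : p ∈ cyclicLine n j) (hqj : q ∈ cyclicLine n j) : i = j := by
  obtain ⟨a, ha, rfl⟩ := mem_cyclicLine_iff_exists_int.1 hpi
  obtain ⟨b, hb, rfl⟩ := mem_cyclicLine_iff_exists_int.1 hqi
  obtain ⟨c, hc, hpc⟩ := mem_cyclicLine_iff_exists_int.1 hpj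
  obtain ⟨d, hd, hqd⟩ := mem_cyclicLine_iff_exists_int.1 hqj
  simp only [Finset.mem_insert, Finset.mem_singleton] at ha hb hc hd
  have hab : a ≠ b := by rintro rfl; exact hpq rfl
  have hdiff : a - b = c - d := by
    refine ZMod.eq_of_intCast_eq_of_abs_sub_lt (by push_cast; linear_combination hpc - hqd) ?_
    rw [abs_lt]
    omega
  -- the six differences `±1, ±2, ±3` of `{0, 1, 3}` are distinct
  have hac : a = c := by omega
  subst hac
  exact add_right_cancel hpc

lemma cyclicLine_injective (hn : 7 ≤ n) : Function.Injective (cyclicLine n) := by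
  intro i j hij
  have h1 : (1 : ZMod n) ≠ 0 := by exact_mod_cast ZMod.natCast_ne_zero_of_lt one_pos (by omega)
  have hi : i ∈ cyclicLine n i := mem_cyclicLine.2 (.inl rfl)
  have hi1 : i + 1 ∈ cyclicLine n i := mem_cyclicLine.2 (.inr (.inl rfl))
  exact eq_of_mem_cyclicLine_of_mem_cyclicLine hn (by simpa using h1) hi hi1 (hij ▸ hi) (hij ▸ hi1)

lemma ncard_cyclicLine (i : ZMod n) : (cyclicLine n i).ncard = (cyclicLine n 0).ncard := by
  rw [cyclicLine_eq_image, Set.ncard_image_of_injective _ (add_right_injective i)]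

lemma ncard_setOf_mem_cyclicLine (p : ZMod n) :
    {i | p ∈ cyclicLine n i}.ncard = (cyclicLine n 0).ncard := by
  rw [setOf_mem_cyclicLine_eq_image, Set.ncard_image_of_injective _ sub_right_injective]

lemma four_five_six_ne_zero_of_cyclicLine_linear [Finite (ZMod n)]
    (hlin : ∀ p q : ZMod n, p ≠ q →
      {i : ZMod n | p ∈ cyclicLine n i ∧ q ∈ cyclicLine n i}.ncard ≤ 1)
    (h1 : (1 : ZMod n) ≠ 0) (h2 : (2 : ZMod n) ≠ 0) (h3 : (3 : ZMod n) ≠ 0) :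
    (4 : ZMod n) ≠ 0 ∧ (5 : ZMod n) ≠ 0 ∧ (6 : ZMod n) ≠ 0 := by
  have hlin' (p q i j : ZMod n) (hpq : p ≠ q) (hi : p ∈ cyclicLine n i ∧ q ∈ cyclicLine n i)
      (hj : p ∈ cyclicLine n j ∧ q ∈ cyclicLine n j) : i = j :=
    (Set.ncard_le_one_iff (Set.toFinite _)).1 (hlin p q hpq) hi hj
  refine ⟨fun h4 => h1 ?_, fun h5 => h2 ?_, fun h6 => h3 ?_⟩
  · -- `0, 1` lie on the lines `{0, 1, 3}` and `{1, 2, 4}`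
    refine (hlin' 0 1 0 1 h1.symm ?_ ?_).symm
    · simp [cyclicLine]
    · exact ⟨mem_cyclicLine.2 <| .inr <| .inr <| by linear_combination -h4,
        mem_cyclicLine.2 <| .inl rfl⟩
  · -- `0, 2` lie on the lines `{2, 3, 5}` and `{4, 5, 7}`
    have := hlin' 0 2 2 4 h2.symm ?_ ?_
    · linear_combination -this
    · exact ⟨mem_cyclicLine.2 <| .inr <| .inr <| by linear_combination -h5,
        mem_cyclicLine.2 <| .inl rfl⟩
    · exact ⟨mem_cyclicLine.2 <| .inr <| .inl <| by linear_combination -h5,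
        mem_cyclicLine.2 <| .inr <| .inr <| by linear_combination -h5⟩
  · -- `0, 3` lie on the lines `{0, 1, 3}` and `{3, 4, 6}`
    refine (hlin' 0 3 0 3 h3.symm ?_ ?_).symm
    · simp [cyclicLine]
    · exact ⟨mem_cyclicLine.2 <| .inr <| .inr <| by linear_combination -h6,
        mem_cyclicLine.2 <| .inl rfl⟩

lemma seven_le_of_one_to_six_ne_zero (hn : n ≠ 0) (h1 : (1 : ZMod n) ≠ 0) (h2 : (2 : ZMod n) ≠ 0)
    (h3 : (3 : ZMod n) ≠ 0) (h4 : (4 : ZMod n) ≠ 0) (h5 : (5 : ZMod n) ≠ 0)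
    (h6 : (6 : ZMod n) ≠ 0) : 7 ≤ n := by
  by_contra! hn7
  have := Nat.pos_of_ne_zero hn
  interval_cases n <;> revert h1 h2 h3 h4 h5 h6 <;> decide

end

/-- The cyclic incidence structure with point set `ZMod n` and lines
`{i, i+1, i+3}`, `i ∈ ZMod n`, is a symmetric `n₃` configuration — i.e. it is a
finite structure with `n` distinct lines which is linear (two distinct points lie on
at most one common line), each point lying on exactly 3 lines and each line
containing exactly 3 points — if and only if `n ≥ 7`. -/
theorem cyclic_configuration_iff_seven_le (n : ℕ) :
    (Finite (ZMod n) ∧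
     Function.Injective (cyclicLine n) ∧
     (∀ p q : ZMod n, p ≠ q →
        {i : ZMod n | p ∈ cyclicLine n i ∧ q ∈ cyclicLine n i}.ncard ≤ 1) ∧
     (∀ p : ZMod n, {i : ZMod n | p ∈ cyclicLine n i}.ncard = 3) ∧
     (∀ i : ZMod n, (cyclicLine n i).ncard = 3)) ↔ 7 ≤ n := by
  constructor
  · rintro ⟨hfin, -, hlin, -, hline⟩
    have hn : n ≠ 0 := by rintro rfl; exact not_finite (ZMod 0)
    obtain ⟨h1, h2, h3⟩ := ncard_cyclicLine_zero_eq_three_iff.1 (hline 0)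
    obtain ⟨h4, h5, h6⟩ := four_five_six_ne_zero_of_cyclicLine_linear hlin h1 h2 h3
    exact seven_le_of_one_to_six_ne_zero hn h1 h2 h3 h4 h5 h6
  · intro hn
    have : NeZero n := ⟨by omega⟩
    have hline := ncard_cyclicLine_zero (by omega : 4 ≤ n)
    refine ⟨inferInstance, cyclicLine_injective hn, fun p q hpq => ?_,
      fun p => (ncard_setOf_mem_cyclicLine p).trans hline,
      fun i => (ncard_cyclicLine i).trans hline⟩
    exact (Set.ncard_le_one_iff (Set.toFinite _)).2 fun ⟨hpi, hqi⟩ ⟨hpj, hqj⟩ =>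
      eq_of_mem_cyclicLine_of_mem_cyclicLine hn hpq hpi hqi hpj hqj
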